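/- Under the interference-alignment hypotheses, let X ⊆ {1,…,k} be a subset such that Σ_{i∈X} rowSpace(S_i) = 𝔽^l. If Ψ_1, …, Ψ_r are l × l matrices over 𝔽 such that rowSpace(S_i · Ψ_u) ⊆ rowSpace(S_i) for every i ∈ X and every u ∈ {1,…,r}, and Ψ_1 + Σ_{u=2}^r Ψ_u · (Σ_{j∈X} C_{u,j}) = 0 (zero matrix), then Ψ_u = 0 for every u ∈ {1,…,r}. -/

import Mathlib

/-!
Multiply the relation on the left by `S i` for some `i ∈ X`. By the alignment hypotheses,
`S i * Ψ u₀` and every cross term `S i * Ψ u * C u j` with `j ≠ i` have rows in the row space of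
`S i = S i * C u₀ i`, while `S i * Ψ u * C u i` has rows in that of `S i * C u i`. These row
spaces are independent, so `S i * Ψ u * C u i = 0`, hence `S i * Ψ u = 0` for `u ≠ u₀` since
`C u i` is invertible. As the row spaces of the `S i`, `i ∈ X`, span everything, `Ψ u = 0` for
`u ≠ u₀`, and then the relation itself gives `Ψ u₀ = 0`.
-/

open Finset Submodule

namespace Matrix

variable {R m n o : Type*} [CommRing R]

def rowsIn (V : Submodule R (n → R)) : Submodule R (Matrix m n R) :=
  Submodule.pi Set.univ fun _ => V

theorem mem_rowsIn_iff {V : Submodule R (n → R)} {A : Matrix m n R} :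
    A ∈ rowsIn V ↔ span R (Set.range A) ≤ V := by
  rw [span_le]
  exact ⟨fun h _ ⟨t, ht⟩ => ht ▸ h t trivial, fun h t _ => h ⟨t, rfl⟩⟩

theorem mul_mem_rowsIn_span_range_mul [Fintype n] {A B : Matrix m n R}
    (h : A ∈ rowsIn (span R (Set.range B))) (M : Matrix n o R) :
    A * M ∈ rowsIn (span R (Set.range (B * M))) := by
  have hBM : span R (Set.range (B * M)) = (span R (Set.range B)).map M.vecMulLinear := by
    rw [map_span, ← Set.range_comp (⇑M.vecMulLinear) B]
    rfl
  intro t _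
  rw [hBM]
  exact mem_map_of_mem (h t trivial)

theorem mul_eq_zero_iff_span_range_le_ker [Fintype n] {A : Matrix m n R} {M : Matrix n o R} :
    A * M = 0 ↔ span R (Set.range A) ≤ LinearMap.ker M.vecMulLinear := by
  rw [← mem_rowsIn_iff]
  exact ⟨fun h t _ => congrFun h t, fun h => funext fun t => h t trivial⟩

theorem eq_zero_of_forall_mul_eq_zero [Fintype n] {ι : Type*} {S : ι → Matrix m n R}
    {X : Finset ι} (hX : ⨆ i ∈ X, span R (Set.range (S i)) = ⊤) {M : Matrix n o R}
    (h : ∀ i ∈ X, S i * M = 0) : M = 0 := by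
  have hker : LinearMap.ker M.vecMulLinear = ⊤ :=
    top_le_iff.1 (hX ▸ iSup₂_le fun i hi => mul_eq_zero_iff_span_range_le_ker.1 (h i hi))
  apply vecMul_injective
  funext v
  simpa using LinearMap.congr_fun (LinearMap.ker_eq_top.1 hker) v

end Matrix

open Matrix

theorem iSupIndep.eq_zero_of_sum_mem_rowsIn {R ι m n : Type*} [CommRing R] [Fintype ι]
    {p : ι → Submodule R (n → R)} (hp : iSupIndep p) {M : ι → Matrix m n R}
    (hM : ∀ i, M i ∈ rowsIn (p i)) (hsum : ∑ i, M i = 0) (i : ι) : M i = 0 := by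
  funext t
  refine (iSupIndep_iff_finsetSum_eq_zero_imp_eq_zero p).1 hp univ (fun i => M i t)
    (fun i _ => hM i t trivial) ?_ i (mem_univ i)
  ext j
  simpa [Matrix.sum_apply] using congrFun₂ hsum t j

section InterferenceAlignment

variable {R ι κ m n : Type*} [CommRing R] [Fintype ι] [DecidableEq ι] [Fintype n]
  {S : κ → Matrix m n R} {C : ι → κ → Matrix n n R} {u₀ : ι} {X : Finset κ}
  {Ψ : ι → Matrix n n R}

theorem mul_mul_eq_zero_of_interference_alignment [DecidableEq n] [DecidableEq κ]
    (hC₀ : ∀ j, C u₀ j = 1) {i : κ} (hi : i ∈ X)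
    (hIA1 : ∀ j ≠ i, ∀ u, span R (Set.range (S i * C u j)) = span R (Set.range (S i)))
    (hIA2 : iSupIndep fun u => span R (Set.range (S i * C u i)))
    (hΨ : ∀ u, span R (Set.range (S i * Ψ u)) ≤ span R (Set.range (S i)))
    (hsum : Ψ u₀ + ∑ u ∈ univ.erase u₀, Ψ u * ∑ j ∈ X, C u j = 0)
    {u : ι} (hu : u ≠ u₀) : S i * Ψ u * C u i = 0 := by
  have hΨ' (w : ι) : S i * Ψ w ∈ rowsIn (span R (Set.range (S i))) := mem_rowsIn_iff.2 (hΨ w)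
  have hp₀ : span R (Set.range (S i * C u₀ i)) = span R (Set.range (S i)) := by
    simp only [hC₀, Matrix.mul_one]
  set E := ∑ w ∈ univ.erase u₀, ∑ j ∈ X.erase i, S i * Ψ w * C w j
  have hE : E ∈ rowsIn (span R (Set.range (S i * C u₀ i))) := by
    refine sum_mem fun w _ => sum_mem fun j hj => ?_
    rw [hp₀, ← hIA1 j (ne_of_mem_erase hj) w]
    exact mul_mem_rowsIn_span_range_mul (hΨ' w) _
  have hdecomp : ∑ w, (S i * Ψ w * C w i + if w = u₀ then E else 0) = 0 := by
    have hsplit (w : ι) : S i * (Ψ w * ∑ j ∈ X, C w j) =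
        S i * Ψ w * C w i + ∑ j ∈ X.erase i, S i * Ψ w * C w j := by
      rw [← add_sum_erase _ _ hi, mul_add, mul_sum, Matrix.mul_add, Matrix.mul_sum]
      simp only [Matrix.mul_assoc]
    rw [sum_add_distrib, sum_ite_eq', if_pos (mem_univ _), ← add_sum_erase _ _ (mem_univ u₀),
      hC₀, Matrix.mul_one, add_assoc, ← sum_add_distrib]
    simp_rw [← hsplit]
    rw [← Matrix.mul_sum, ← Matrix.mul_add, hsum, Matrix.mul_zero]
  have hzero := hIA2.eq_zero_of_sum_mem_rowsIn
    (M := fun w => S i * Ψ w * C w i + if w = u₀ then E else 0) (fun w => ?_) hdecomp u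
  · simpa [hu] using hzero
  · refine add_mem (mul_mem_rowsIn_span_range_mul (hΨ' w) _) ?_
    rcases eq_or_ne w u₀ with rfl | hw
    · simpa using hE
    · simp [hw]

theorem eq_zero_of_interference_alignment [DecidableEq n] [DecidableEq κ]
    (hC : ∀ u j, IsUnit (C u j)) (hC₀ : ∀ j, C u₀ j = 1)
    (hIA1 : ∀ i j, j ≠ i → ∀ u, span R (Set.range (S i * C u j)) = span R (Set.range (S i)))
    (hIA2 : ∀ i, iSupIndep fun u => span R (Set.range (S i * C u i)))
    (hX : ⨆ i ∈ X, span R (Set.range (S i)) = ⊤)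
    (hΨ : ∀ i ∈ X, ∀ u, span R (Set.range (S i * Ψ u)) ≤ span R (Set.range (S i)))
    (hsum : Ψ u₀ + ∑ u ∈ univ.erase u₀, Ψ u * ∑ j ∈ X, C u j = 0) (u : ι) : Ψ u = 0 := by
  have hne (u : ι) (hu : u ≠ u₀) : Ψ u = 0 := by
    refine eq_zero_of_forall_mul_eq_zero hX fun i hi => ?_
    rw [← mul_nonsing_inv_cancel_right (C u i) (S i * Ψ u) ((isUnit_iff_isUnit_det _).1 (hC u i)),
      mul_mul_eq_zero_of_interference_alignment hC₀ hi (fun j hj => hIA1 i j hj) (hIA2 i)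
        (hΨ i hi) hsum hu, Matrix.zero_mul]
  rcases eq_or_ne u u₀ with rfl | hu
  · rwa [sum_eq_zero fun w hw => by rw [hne w (ne_of_mem_erase hw), Matrix.zero_mul],
      add_zero] at hsum
  · exact hne u hu

end InterferenceAlignment

theorem stmt_7 {𝔽 : Type*} [Field 𝔽] (k r l : ℕ)
    (hr : 2 ≤ r)
    (S : Fin k → Matrix (Fin (l / r)) (Fin l) 𝔽)
    (C : Fin r → Fin k → Matrix (Fin l) (Fin l) 𝔽)
    (hCinv : ∀ u j, IsUnit (C u j))
    (hC1 : ∀ j, C ⟨0, by omega⟩ j = 1)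
    (hIA1 : ∀ (i j : Fin k), j ≠ i → ∀ u : Fin r,
      Submodule.span 𝔽 (Set.range (S i * C u j)) = Submodule.span 𝔽 (Set.range (S i)))
    (hIA2 : ∀ i : Fin k, iSupIndep
      fun u : Fin r => Submodule.span 𝔽 (Set.range (S i * C u i)))
    (X : Finset (Fin k))
    (hX : (⨆ i ∈ X, Submodule.span 𝔽 (Set.range (S i))) = ⊤)
    (Ψ : Fin r → Matrix (Fin l) (Fin l) 𝔽)
    (hΨ : ∀ i ∈ X, ∀ u : Fin r,
      Submodule.span 𝔽 (Set.range (S i * Ψ u)) ≤ Submodule.span 𝔽 (Set.range (S i)))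
    (hsum : Ψ ⟨0, by omega⟩ +
      ∑ u ∈ Finset.univ.filter (fun u : Fin r => (u : ℕ) ≠ 0),
        Ψ u * (∑ j ∈ X, C u j) = 0) :
    ∀ u : Fin r, Ψ u = 0 := by
  have hnonzero : univ.filter (fun u : Fin r => (u : ℕ) ≠ 0) = univ.erase ⟨0, by omega⟩ := by
    ext w
    simp [Fin.ext_iff]
  rw [hnonzero] at hsum
  exact eq_zero_of_interference_alignment hCinv hC1 hIA1 hIA2 hX hΨ hsum
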